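/- arXiv:2401.12558 — 7 statements merged into one kernel-verified Lean document; each statement's English description precedes it below -/
import Mathlib

section
/- For positive real numbers y_1, ..., y_m and any index i with 1 ≤ i ≤ m, the inequality (y_1 + ... + y_m + 1/(y_1 ⋯ y_m))^m · y_i > m^m holds. -/
/-!
Replace `y i` by `y i + 1 / P`, where `P = ∏ j, y j`. The new tuple has sum `∑ j, y j + 1 / P` and
product `P / y i + 1 / y i > 1 / y i`, so AM-GM for it gives `((∑ j, y j + 1 / P) / m) ^ m > 1 / y i`.
-/

open Finset

theorem Real.prod_le_arith_mean_pow {ι : Type*} (s : Finset ι) (z : ι → ℝ)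
    (hz : ∀ i ∈ s, 0 ≤ z i) : ∏ i ∈ s, z i ≤ ((∑ i ∈ s, z i) / #s) ^ #s := by
  rcases s.eq_empty_or_nonempty with rfl | hs
  · simp
  have hcard : (0 : ℝ) < #s := by exact_mod_cast hs.card_pos
  have amgm := Real.geom_mean_le_arith_mean_weighted s (fun _ ↦ (#s : ℝ)⁻¹) z
    (fun _ _ ↦ by positivity) (by simp [hcard.ne']) hz
  rw [Real.finsetProd_rpow s z hz, ← mul_sum, inv_mul_eq_div] at amgm
  calc ∏ i ∈ s, z i = ((∏ i ∈ s, z i) ^ (#s : ℝ)⁻¹) ^ #s :=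
        (Real.rpow_inv_natCast_pow (prod_nonneg hz) hs.card_pos.ne').symm
    _ ≤ _ := pow_le_pow_left₀ (Real.rpow_nonneg (prod_nonneg hz) _) amgm _

section UpdateAdd

variable {ι : Type*} [Fintype ι] [DecidableEq ι]

theorem Finset.sum_update_add {M : Type*} [AddCommMonoid M] (y : ι → M) (i : ι) (c : M) :
    ∑ j, Function.update y i (y i + c) j = ∑ j, y j + c := by
  rw [sum_update_of_mem (mem_univ i), sdiff_singleton_eq_erase, ← add_sum_erase _ y (mem_univ i),
    add_right_comm]

theorem Finset.prod_update_add {K : Type*} [Field K] {y : ι → K} {i : ι} (hi : y i ≠ 0) (c : K) :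
    ∏ j, Function.update y i (y i + c) j = (y i + c) * (∏ j, y j) / y i := by
  rw [prod_update_of_mem (mem_univ i), sdiff_singleton_eq_erase, ← mul_prod_erase _ y (mem_univ i),
    mul_div_assoc, mul_div_cancel_left₀ _ hi]

end UpdateAdd

theorem Real.card_pow_lt_sum_add_inv_prod_pow_mul {ι : Type*} [Fintype ι] [DecidableEq ι]
    {y : ι → ℝ} (hy : ∀ j, 0 < y j) (i : ι) :
    (Fintype.card ι : ℝ) ^ Fintype.card ι < (∑ j, y j + 1 / ∏ j, y j) ^ Fintype.card ι * y i := by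
  set P := ∏ j, y j
  have hP : 0 < P := prod_pos fun j _ ↦ hy j
  set z := Function.update y i (y i + 1 / P)
  have hz : ∀ j ∈ univ, 0 ≤ z j := by
    intro j _
    rcases eq_or_ne j i with rfl | hj
    · simp only [z, Function.update_self]
      have := hy j
      positivity
    · simp only [z, Function.update_of_ne hj]
      exact (hy j).le
  have hn : (0 : ℝ) < Fintype.card ι := by exact_mod_cast Fintype.card_pos_iff.mpr ⟨i⟩
  have hlt : 1 / y i < ∏ j, z j := by
    rw [prod_update_add (hy i).ne', add_mul, one_div_mul_cancel hP.ne', add_div]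
    exact lt_add_of_pos_left _ (div_pos (mul_pos (hy i) hP) (hy i))
  have hle := prod_le_arith_mean_pow univ z hz
  rw [sum_update_add, card_univ, div_pow] at hle
  have key := hlt.trans_le hle
  rwa [lt_div_iff₀ (by positivity), div_mul_eq_mul_div, div_lt_iff₀ (hy i), one_mul] at key

theorem stmt2_general (m : ℕ) (y : Fin m → ℝ) (hy : ∀ i, 0 < y i) (i : Fin m) :
    ((m : ℝ)) ^ m < ((∑ j, y j) + 1 / ∏ j, y j) ^ m * y i := by
  simpa using Real.card_pow_lt_sum_add_inv_prod_pow_mul hy i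

theorem stmt2 (m : ℕ) (hm : 1 ≤ m) (y : Fin m → ℝ) (hy : ∀ i, 0 < y i) (i : Fin m) :
    ((m : ℝ)) ^ m < ((∑ j, y j) + 1 / ∏ j, y j) ^ m * y i :=
  stmt2_general m y hy i
end

section
/- Let K ⊆ ℝⁿ be a convex polyhedron and let h₁, h₂ be affine functions with hyperplanes H₁ = {h₁=0}, H₂ = {h₂=0}. If K ∩ H₁ ⊆ {h₂ > 0}, then there exists ε > 0 such that K ∩ {−ε ≤ h₁ ≤ ε} ⊆ {h₂ > 0}. -/
/-!
Fourier–Motzkin elimination shows that adding a finitely generated subspace to a polyhedron, and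
hence taking the image of a polyhedron under an affine functional, again gives a polyhedron. So
`h₁ '' (K ∩ {h₂ ≤ 0})` is a polyhedron in `ℝ`, hence closed; it misses `0` by hypothesis, so it
misses a whole interval `[-ε, ε]`.
-/

open Set Pointwise

theorem Set.Finite.exists_forall_le_and_le {α ι κ : Type*} [LinearOrder α] [Nonempty α]
    {A : Set ι} {B : Set κ} (hA : A.Finite) (hB : B.Finite) (l : ι → α) (u : κ → α)
    (h : ∀ i ∈ A, ∀ j ∈ B, l i ≤ u j) : ∃ t, (∀ i ∈ A, l i ≤ t) ∧ ∀ j ∈ B, t ≤ u j := by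
  rcases A.eq_empty_or_nonempty with rfl | hne
  · obtain ⟨t, ht⟩ := (hB.image u).bddBelow
    exact ⟨t, by simp, fun j hj => ht (mem_image_of_mem u hj)⟩
  · obtain ⟨i₀, hi₀, hmax⟩ := Set.exists_max_image A l hA hne
    exact ⟨l i₀, hmax, h i₀ hi₀⟩

section Polyhedral

variable {𝕜 E E' : Type*} [Field 𝕜] [LinearOrder 𝕜]
  [AddCommGroup E] [Module 𝕜 E] [AddCommGroup E'] [Module 𝕜 E']

variable (𝕜) in
def IsPolyhedral (S : Set E) : Prop :=
  ∃ s : Set (E →ᵃ[𝕜] 𝕜), s.Finite ∧ S = {x | ∀ F ∈ s, 0 ≤ F x}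

namespace IsPolyhedral

theorem setOf_nonneg (F : E →ᵃ[𝕜] 𝕜) : IsPolyhedral 𝕜 {x | 0 ≤ F x} :=
  ⟨{F}, finite_singleton F, by simp⟩

theorem inter {S T : Set E} (hS : IsPolyhedral 𝕜 S) (hT : IsPolyhedral 𝕜 T) :
    IsPolyhedral 𝕜 (S ∩ T) := by
  obtain ⟨s, hs, rfl⟩ := hS
  obtain ⟨t, ht, rfl⟩ := hT
  exact ⟨s ∪ t, hs.union ht, by ext; simp [or_imp, forall_and]⟩

theorem preimage {S : Set E'} (hS : IsPolyhedral 𝕜 S) (g : E →ᵃ[𝕜] E') :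
    IsPolyhedral 𝕜 (g ⁻¹' S) := by
  obtain ⟨s, hs, rfl⟩ := hS
  exact ⟨(fun F => F.comp g) '' s, hs.image _, by ext; simp⟩

end IsPolyhedral

/-- Eliminating the direction `v`: keep the constraints not involving `v`, and for each pair of
constraints bounding `v` from opposite sides add the nonnegative combination in which `v`
cancels. -/
def fourierMotzkin (s : Set (E →ᵃ[𝕜] 𝕜)) (v : E) : Set (E →ᵃ[𝕜] 𝕜) :=
  {F ∈ s | F.linear v = 0} ∪
    image2 (fun F G => F.linear v • G - G.linear v • F)
      {F ∈ s | 0 < F.linear v} {G ∈ s | G.linear v < 0}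

theorem Set.Finite.fourierMotzkin {s : Set (E →ᵃ[𝕜] 𝕜)} (hs : s.Finite) (v : E) :
    (fourierMotzkin s v).Finite :=
  (hs.sep _).union ((hs.sep _).image2 _ (hs.sep _))

variable [IsStrictOrderedRing 𝕜]

theorem exists_forall_nonneg_mul_add_iff {ι : Type*} {s : Set ι} (hs : s.Finite) (c b : ι → 𝕜) :
    (∃ t, ∀ i ∈ s, 0 ≤ t * c i + b i) ↔
      (∀ i ∈ s, c i = 0 → 0 ≤ b i) ∧
        ∀ i ∈ s, 0 < c i → ∀ j ∈ s, c j < 0 → 0 ≤ c i * b j - c j * b i := by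
  constructor
  · rintro ⟨t, ht⟩
    refine ⟨fun i hi hci => by simpa [hci] using ht i hi, fun i hi hci j hj hcj => ?_⟩
    nlinarith [mul_nonneg hci.le (ht j hj), mul_nonneg (neg_nonneg.2 hcj.le) (ht i hi)]
  · rintro ⟨hzero, hpair⟩
    obtain ⟨t, hlow, hup⟩ := (hs.sep fun i => 0 < c i).exists_forall_le_and_le
      (hs.sep fun j => c j < 0) (fun i => -b i / c i) (fun j => -b j / c j)
      fun i ⟨hi, hci⟩ j ⟨hj, hcj⟩ => by
        rw [div_le_iff₀ hci, div_mul_eq_mul_div, le_div_iff_of_neg hcj]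
        linarith [hpair i hi hci j hj hcj]
    refine ⟨t, fun i hi => ?_⟩
    rcases lt_trichotomy (c i) 0 with hci | hci | hci
    · have := hup i ⟨hi, hci⟩
      rw [le_div_iff_of_neg hci] at this
      linarith
    · simpa [hci] using hzero i hi hci
    · have := hlow i ⟨hi, hci⟩
      rw [div_le_iff₀ hci] at this
      linarith

theorem exists_forall_nonneg_add_smul_iff {s : Set (E →ᵃ[𝕜] 𝕜)} (hs : s.Finite) (v y : E) :
    (∃ t : 𝕜, ∀ F ∈ s, 0 ≤ F (y + t • v)) ↔ ∀ G ∈ fourierMotzkin s v, 0 ≤ G y := by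
  have hline (F : E →ᵃ[𝕜] 𝕜) (t : 𝕜) : F (y + t • v) = t * F.linear v + F y := by
    rw [add_comm, ← vadd_eq_add, F.map_vadd, map_smul, vadd_eq_add, smul_eq_mul]
  simp_rw [hline, exists_forall_nonneg_mul_add_iff hs]
  simp only [fourierMotzkin, mem_union, mem_sep_iff, forall_mem_image2, or_imp, forall_and,
    and_imp, AffineMap.coe_sub, AffineMap.coe_smul, Pi.sub_apply, Pi.smul_apply, smul_eq_mul]

namespace IsPolyhedral

theorem add_span_singleton {S : Set E} (hS : IsPolyhedral 𝕜 S) (v : E) :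
    IsPolyhedral 𝕜 (S + (𝕜 ∙ v : Set E)) := by
  obtain ⟨s, hs, rfl⟩ := hS
  refine ⟨fourierMotzkin s v, hs.fourierMotzkin v, ?_⟩
  ext y
  rw [mem_ofPred_eq, ← exists_forall_nonneg_add_smul_iff hs]
  simp only [mem_add, SetLike.mem_coe, Submodule.mem_span_singleton, mem_ofPred_eq]
  constructor
  · rintro ⟨x, hx, _, ⟨a, rfl⟩, rfl⟩
    exact ⟨-a, by simpa using hx⟩
  · rintro ⟨t, ht⟩
    exact ⟨_, ht, _, ⟨-t, rfl⟩, by simp⟩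

theorem add_submodule {S : Set E} (hS : IsPolyhedral 𝕜 S) {W : Submodule 𝕜 E} (hW : W.FG) :
    IsPolyhedral 𝕜 (S + (W : Set E)) := by
  induction W, hW using Submodule.fg_induction generalizing S with
  | singleton v => exact hS.add_span_singleton v
  | sup W₁ W₂ _ _ ih₁ ih₂ =>
    rw [Submodule.coe_sup, ← add_assoc]
    exact ih₂ (ih₁ hS)

theorem image_affineMap [Module.Finite 𝕜 E] {S : Set E} (hS : IsPolyhedral 𝕜 S)
    (h : E →ᵃ[𝕜] 𝕜) : IsPolyhedral 𝕜 (h '' S) := by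
  set graph : Set (E × 𝕜) := {p | p.1 ∈ S ∧ h p.1 = p.2}
  have hgraph : IsPolyhedral 𝕜 graph := by
    convert ((hS.preimage (AffineMap.fst : E × 𝕜 →ᵃ[𝕜] E)).inter
      (setOf_nonneg (AffineMap.snd - h.comp AffineMap.fst))).inter
      (setOf_nonneg (h.comp AffineMap.fst - AffineMap.snd)) using 1
    ext p
    simp [graph, le_antisymm_iff, and_assoc]
  have himage : h '' S =
      LinearMap.inr 𝕜 E 𝕜 ⁻¹' (graph + (LinearMap.range (LinearMap.inl 𝕜 E 𝕜) : Set (E × 𝕜))) := by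
    ext t
    simp only [mem_image, mem_preimage, mem_add, SetLike.mem_coe, LinearMap.mem_range]
    constructor
    · rintro ⟨x, hx, rfl⟩
      exact ⟨(x, h x), ⟨hx, rfl⟩, _, ⟨-x, rfl⟩, by simp⟩
    · rintro ⟨⟨x, s⟩, ⟨hx, hxs⟩, _, ⟨w, rfl⟩, hsum⟩
      exact ⟨x, hx, hxs.trans (by simpa using congrArg Prod.snd hsum)⟩
  rw [himage]
  exact (hgraph.add_submodule (Submodule.fg_range _)).preimage (LinearMap.inr 𝕜 E 𝕜).toAffineMap

end IsPolyhedral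

end Polyhedral

theorem IsPolyhedral.isClosed {E : Type*} [NormedAddCommGroup E] [NormedSpace ℝ E]
    [FiniteDimensional ℝ E] {S : Set E} (hS : IsPolyhedral ℝ S) : IsClosed S := by
  obtain ⟨s, -, rfl⟩ := hS
  simp only [ofPred_forall]
  exact isClosed_biInter fun F _ => isClosed_le continuous_const F.continuous_of_finiteDimensional

theorem stmt7 (n m : ℕ) (f : Fin m → (EuclideanSpace ℝ (Fin n) →ᵃ[ℝ] ℝ))
    (K : Set (EuclideanSpace ℝ (Fin n))) (hK : K = {x | ∀ i, 0 ≤ f i x})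
    (h₁ h₂ : EuclideanSpace ℝ (Fin n) →ᵃ[ℝ] ℝ)
    (hsep : ∀ x ∈ K, h₁ x = 0 → 0 < h₂ x) :
    ∃ ε > 0, ∀ x ∈ K, -ε ≤ h₁ x → h₁ x ≤ ε → 0 < h₂ x := by
  have hKpoly : IsPolyhedral ℝ K := ⟨range f, finite_range f, by simp [hK]⟩
  set T := h₁ '' (K ∩ {x | 0 ≤ (-h₂) x})
  have hTclosed : IsClosed T :=
    ((hKpoly.inter (.setOf_nonneg (-h₂))).image_affineMap h₁).isClosed
  have hT0 : (0 : ℝ) ∉ T := by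
    rintro ⟨x, ⟨hxK, hx₂⟩, hx₁⟩
    have := hsep x hxK hx₁
    simp only [mem_ofPred_eq, AffineMap.coe_neg, Pi.neg_apply, neg_nonneg] at hx₂
    linarith
  obtain ⟨ε, hε, hball⟩ := Metric.nhds_basis_closedBall.mem_iff.1 (hTclosed.isOpen_compl.mem_nhds hT0)
  refine ⟨ε, hε, fun x hxK hlow hup => ?_⟩
  by_contra! hx₂
  refine hball ?_ ⟨x, ⟨hxK, by simpa using hx₂⟩, rfl⟩
  rw [Real.closedBall_eq_Icc]
  constructor <;> linarith
end

section
/- Let K ⊆ {x_n ≥ 0} ⊆ ℝⁿ be an unbounded convex polyhedron whose recession cone C has dimension n and with eₙ ∈ Int(C). Then the restriction of the orthogonal projection π : ℝⁿ → ℝ^{n-1} × {0}, (x', x_n) ↦ (x', 0), to the boundary ∂K is a homeomorphism onto ℝ^{n-1} × {0}. -/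
/-!
If the ball `B(e, δ)` consists of recession directions of `K`, then `w + t • e ∈ K` as soon as
`‖w - z‖ < t * δ` for some `z ∈ K`. Hence every line `y + ℝ e` meets the closed set `K` in a
half-line `[g y, ∞)`, where `g = lowerHeight K e` (bounded below because `ℓ` is bounded below on
`K` and `ℓ e = 1`); the points strictly above `g y` are interior, and `g` is `δ⁻¹`-Lipschitz.
So `∂K` is the graph of the continuous function `g` over the hyperplane `ℓ = 0`, and the
projection along `e` inverts `y ↦ y + g y • e`.
-/

open Set Metric

variable {E : Type*} [NormedAddCommGroup E] [NormedSpace ℝ E]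

def recessionCone (K : Set E) : Set E := {v | ∀ x ∈ K, ∀ t : ℝ, 0 ≤ t → x + t • v ∈ K}

noncomputable def lowerHeight (K : Set E) (e y : E) : ℝ := sInf {t : ℝ | y + t • e ∈ K}

section

variable {K : Set E} {e y : E} {δ : ℝ}

theorem add_smul_mem_of_ball_subset_recessionCone (hδ : 0 < δ)
    (hball : ball e δ ⊆ recessionCone K) {z w : E} (hz : z ∈ K) {t : ℝ}
    (hwt : ‖w - z‖ < t * δ) : w + t • e ∈ K := by
  have ht : 0 < t := pos_of_mul_pos_left ((norm_nonneg _).trans_lt hwt) hδ.le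
  have hv : t⁻¹ • (w - z) + e ∈ ball e δ := by
    rw [mem_ball, dist_eq_norm, add_sub_cancel_right, norm_smul, Real.norm_of_nonneg
      (inv_nonneg.2 ht.le), inv_mul_lt_iff₀ ht]
    exact hwt
  convert hball hv z hz t ht.le using 1
  rw [smul_add, smul_smul, mul_inv_cancel₀ ht.ne', one_smul]
  abel

theorem setOf_add_smul_mem_nonempty (hδ : 0 < δ) (hball : ball e δ ⊆ recessionCone K)
    (hK : K.Nonempty) (y : E) : {t : ℝ | y + t • e ∈ K}.Nonempty := by
  obtain ⟨p, hp⟩ := hK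
  refine ⟨‖y - p‖ / δ + 1, add_smul_mem_of_ball_subset_recessionCone hδ hball hp ?_⟩
  rw [add_mul, div_mul_cancel₀ _ hδ.ne', one_mul]
  linarith

theorem lowerHeight_le (hbdd : BddBelow {t : ℝ | y + t • e ∈ K}) {t : ℝ}
    (ht : y + t • e ∈ K) : lowerHeight K e y ≤ t :=
  csInf_le hbdd ht

theorem add_lowerHeight_smul_mem (hKc : IsClosed K) (hne : {t : ℝ | y + t • e ∈ K}.Nonempty)
    (hbdd : BddBelow {t : ℝ | y + t • e ∈ K}) : y + lowerHeight K e y • e ∈ K :=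
  (hKc.preimage (by fun_prop : Continuous fun t : ℝ => y + t • e)).csInf_mem hne hbdd

theorem add_smul_mem_interior_of_lowerHeight_lt (hδ : 0 < δ)
    (hball : ball e δ ⊆ recessionCone K) (hmem : y + lowerHeight K e y • e ∈ K) {t : ℝ}
    (ht : lowerHeight K e y < t) : y + t • e ∈ interior K := by
  set s := t - lowerHeight K e y
  refine mem_interior.2 ⟨ball (y + t • e) (s * δ), fun w hw => ?_, isOpen_ball,
    mem_ball_self (mul_pos (sub_pos.2 ht) hδ)⟩
  have hw' : ‖(w - s • e) - (y + lowerHeight K e y • e)‖ < s * δ := by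
    rw [show w - s • e - (y + lowerHeight K e y • e) = w - (y + t • e) by module]
    exact mem_ball_iff_norm.1 hw
  simpa using add_smul_mem_of_ball_subset_recessionCone hδ hball hmem hw'

theorem add_smul_mem_frontier_iff (hKc : IsClosed K) (hK : K.Nonempty) (hδ : 0 < δ)
    (hball : ball e δ ⊆ recessionCone K) (hbdd : BddBelow {t : ℝ | y + t • e ∈ K}) {t : ℝ} :
    y + t • e ∈ frontier K ↔ t = lowerHeight K e y := by
  have hmem := add_lowerHeight_smul_mem hKc (setOf_add_smul_mem_nonempty hδ hball hK y) hbdd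
  rw [hKc.frontier_eq]
  constructor
  · rintro ⟨htK, htint⟩
    refine (lowerHeight_le hbdd htK).eq_or_lt.elim Eq.symm fun hlt => ?_
    exact absurd (add_smul_mem_interior_of_lowerHeight_lt hδ hball hmem hlt) htint
  · rintro rfl
    refine ⟨hmem, fun hint => ?_⟩
    have hopen : IsOpen {s : ℝ | y + s • e ∈ interior K} :=
      isOpen_interior.preimage (by fun_prop)
    obtain ⟨ε, hε, hsub⟩ := isOpen_iff.1 hopen _ hint
    have hbelow : lowerHeight K e y - ε / 2 ∈ {s : ℝ | y + s • e ∈ interior K} :=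
      hsub (by rw [Real.ball_eq_Ioo]; constructor <;> linarith)
    linarith [lowerHeight_le hbdd (interior_subset hbelow)]

theorem lipschitzWith_lowerHeight (hKc : IsClosed K) (hK : K.Nonempty) (hδ : 0 < δ)
    (hball : ball e δ ⊆ recessionCone K) (hbdd : ∀ y, BddBelow {t : ℝ | y + t • e ∈ K}) :
    LipschitzWith (Real.toNNReal δ⁻¹) (lowerHeight K e) := by
  refine LipschitzWith.of_le_add_mul' _ fun x y => le_of_forall_pos_le_add fun ε hε => ?_
  have hmem := add_lowerHeight_smul_mem hKc (setOf_add_smul_mem_nonempty hδ hball hK y) (hbdd y)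
  have hclose : ‖(x + lowerHeight K e y • e) - (y + lowerHeight K e y • e)‖ <
      (δ⁻¹ * dist x y + ε) * δ := by
    rw [add_sub_add_right_eq_sub, ← dist_eq_norm, add_mul, mul_comm δ⁻¹,
      inv_mul_cancel_right₀ hδ.ne']
    linarith [mul_pos hε hδ]
  have hx := add_smul_mem_of_ball_subset_recessionCone hδ hball hmem hclose
  rw [add_assoc, ← add_smul] at hx
  linarith [lowerHeight_le (hbdd x) hx]

end

theorem bddBelow_setOf_add_smul_mem {K : Set E} {e : E} {ℓ : E →ₗ[ℝ] ℝ} (hℓe : ℓ e = 1)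
    (hℓK : BddBelow (ℓ '' K)) (y : E) : BddBelow {t : ℝ | y + t • e ∈ K} := by
  obtain ⟨c, hc⟩ := hℓK
  refine ⟨c - ℓ y, fun t ht => ?_⟩
  have hct := hc ⟨_, ht, rfl⟩
  rw [map_add, map_smul, hℓe, smul_eq_mul, mul_one] at hct
  linarith

theorem exists_homeomorph_frontier_kernel {K : Set E} {e : E} (ℓ : E →L[ℝ] ℝ) (hℓe : ℓ e = 1)
    (hKc : IsClosed K) (hK : K.Nonempty) (hℓK : BddBelow (ℓ '' K))
    (he : e ∈ interior (recessionCone K)) :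
    ∃ φ : frontier K ≃ₜ {y | ℓ y = 0}, ∀ x, (φ x : E) = x - ℓ x • e := by
  obtain ⟨δ, hδ, hball⟩ := isOpen_iff.1 isOpen_interior e he
  replace hball := hball.trans interior_subset
  have hbdd := bddBelow_setOf_add_smul_mem (ℓ := ℓ.toLinearMap) hℓe hℓK
  have hfr y t := add_smul_mem_frontier_iff hKc hK hδ hball (hbdd y) (t := t)
  have hg := (lipschitzWith_lowerHeight hKc hK hδ hball hbdd).continuous
  refine ⟨{ toFun := fun x => ⟨x - ℓ x • e, by simp [hℓe]⟩
            invFun := fun y => ⟨y + lowerHeight K e y • e, (hfr y _).2 rfl⟩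
            left_inv := fun x => Subtype.ext ?_
            right_inv := fun y => Subtype.ext ?_
            continuous_toFun := by fun_prop
            continuous_invFun := by fun_prop }, fun x => rfl⟩
  · have hx := (hfr (x - ℓ x • e) (ℓ x)).1 (by simp)
    simp [← hx]
  · have hy : ℓ y = 0 := y.2
    simp [hℓe, hy]

theorem EuclideanSpace.sub_smul_single_eq_toLp_update {𝕜 ι : Type*} [RCLike 𝕜]
    [DecidableEq ι] (x : EuclideanSpace 𝕜 ι) (i : ι) :
    x - x i • EuclideanSpace.single i (1 : 𝕜) = WithLp.toLp 2 (Function.update x i 0) := by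
  ext j
  by_cases hj : j = i
  · subst hj; simp
  · simp [hj]

theorem stmt9 (n m : ℕ)
    (f : Fin m → (EuclideanSpace ℝ (Fin (n + 1)) →ᵃ[ℝ] ℝ))
    (K : Set (EuclideanSpace ℝ (Fin (n + 1))))
    (hK : K = {x | ∀ i, 0 ≤ f i x})
    (hub : ¬ Bornology.IsBounded K)
    (hsub : K ⊆ {x | 0 ≤ x (Fin.last n)})
    (C : Set (EuclideanSpace ℝ (Fin (n + 1))))
    (hC : C = {v | ∀ x ∈ K, ∀ t : ℝ, 0 ≤ t → x + t • v ∈ K})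
    (hen : EuclideanSpace.single (Fin.last n) (1 : ℝ) ∈ interior C) :
    ∃ φ : frontier K ≃ₜ {y : EuclideanSpace ℝ (Fin (n + 1)) | y (Fin.last n) = 0},
      ∀ x : frontier K, (φ x : EuclideanSpace ℝ (Fin (n + 1))) =
        (WithLp.toLp 2 (Function.update (x : EuclideanSpace ℝ (Fin (n + 1))) (Fin.last n) 0) :
          EuclideanSpace ℝ (Fin (n + 1))) := by
  have hKc : IsClosed K := by
    rw [hK, ofPred_forall]
    exact isClosed_iInter fun i => isClosed_Ici.preimage (f i).continuous_of_finiteDimensional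
  have hKne : K.Nonempty := nonempty_iff_ne_empty.2 fun h => hub (h ▸ Bornology.isBounded_empty)
  obtain ⟨φ, hφ⟩ := exists_homeomorph_frontier_kernel (EuclideanSpace.proj (Fin.last n))
    (by simp) hKc hKne ⟨0, by rintro _ ⟨x, hx, rfl⟩; exact hsub hx⟩ (hC ▸ hen)
  exact ⟨φ, fun x => (hφ x).trans (EuclideanSpace.sub_smul_single_eq_toLp_update _ _)⟩
end

section
/- Let K ⊆ {x_n ≥ 0} ⊆ ℝⁿ be an unbounded convex polyhedron with recession cone of dimension n and eₙ in the interior of the recession cone. Then for every x' ∈ ℝ^{n-1}, the vertical line {x'} × ℝ meets K in a closed ray {x'} × [r, ∞) for some r ≥ 0. -/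
theorem upd_add_aux (n : ℕ) (x : EuclideanSpace ℝ (Fin (n+1))) (a b : ℝ) :
    (WithLp.toLp 2 (Function.update x (Fin.last n) a) : EuclideanSpace ℝ (Fin (n + 1)))
      + b • EuclideanSpace.single (Fin.last n) 1
      = (WithLp.toLp 2 (Function.update x (Fin.last n) (a + b)) : EuclideanSpace ℝ (Fin (n + 1))) := by
  ext i
  show Function.update x (Fin.last n) a i
      + b * (EuclideanSpace.single (Fin.last n) (1:ℝ)) i
    = Function.update x (Fin.last n) (a + b) i
  rw [EuclideanSpace.single_apply]
  by_cases hi : i = Fin.last n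
  · subst hi; simp
  · simp [Function.update_apply, hi]

theorem stmt10 (n m : ℕ)
    (f : Fin m → (EuclideanSpace ℝ (Fin (n + 1)) →ᵃ[ℝ] ℝ))
    (K : Set (EuclideanSpace ℝ (Fin (n + 1))))
    (hK : K = {x | ∀ i, 0 ≤ f i x})
    (hub : ¬ Bornology.IsBounded K)
    (hsub : K ⊆ {x | 0 ≤ x (Fin.last n)})
    (C : Set (EuclideanSpace ℝ (Fin (n + 1))))
    (hC : C = {v | ∀ x ∈ K, ∀ t : ℝ, 0 ≤ t → x + t • v ∈ K})
    (hen : EuclideanSpace.single (Fin.last n) (1 : ℝ) ∈ interior C) :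
    ∀ x : EuclideanSpace ℝ (Fin (n + 1)), ∃ r : ℝ, 0 ≤ r ∧
      {t : ℝ | (WithLp.toLp 2 (Function.update x (Fin.last n) t) : EuclideanSpace ℝ (Fin (n + 1))) ∈ K}
        = Set.Ici r := by
  have hCmem : EuclideanSpace.single (Fin.last n) (1 : ℝ) ∈ C := interior_subset hen
  rw [hC] at hCmem
  -- K is closed
  have hKclosed : IsClosed K := by
    rw [hK]
    have : {x : EuclideanSpace ℝ (Fin (n + 1)) | ∀ i, 0 ≤ f i x}
        = ⋂ i, (f i) ⁻¹' Set.Ici 0 := by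
      ext y; simp [Set.mem_iInter]
    rw [this]
    exact isClosed_iInter fun i =>
      isClosed_Ici.preimage (f i).continuous_of_finiteDimensional
  -- K is nonempty
  have hKne : K.Nonempty := by
    rcases Set.eq_empty_or_nonempty K with h | h
    · exact absurd (h ▸ Bornology.isBounded_empty) hub
    · exact h
  obtain ⟨p, hp⟩ := hKne
  obtain ⟨ε, εpos, hball⟩ :=
    Metric.mem_nhds_iff.mp (mem_interior_iff_mem_nhds.mp hen)
  intro x
  set S : Set ℝ := {t : ℝ |
    (WithLp.toLp 2 (Function.update x (Fin.last n) t) : EuclideanSpace ℝ (Fin (n + 1))) ∈ K} with hS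
  -- S is upward closed
  have hup : ∀ t ∈ S, ∀ s, t ≤ s → s ∈ S := by
    intro t ht s hts
    have hmem := hCmem _ ht (s - t) (by linarith)
    show (WithLp.toLp 2 (Function.update x (Fin.last n) s) : EuclideanSpace ℝ (Fin (n + 1))) ∈ K
    have hts' : t + (s - t) = s := by ring
    rw [← hts', ← upd_add_aux n x t (s - t)]
    exact hmem
  -- S ⊆ Ici 0
  have hS0 : S ⊆ Set.Ici 0 := by
    intro t ht
    have := hsub ht
    simpa using this
  -- S is nonempty
  have hSne : S.Nonempty := by
    set w : EuclideanSpace ℝ (Fin (n + 1)) :=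
      WithLp.toLp 2 (fun i => if i = Fin.last n then 0 else x i - p i) with hw
    set t : ℝ := ‖w‖ / ε + 1 with htd
    have ht0 : 0 < t := by positivity
    have ht' : t ≠ 0 := ne_of_gt ht0
    set v : EuclideanSpace ℝ (Fin (n + 1)) :=
      EuclideanSpace.single (Fin.last n) (1 : ℝ) + t⁻¹ • w with hv
    have hvC : v ∈ C := by
      apply hball
      have hsub' : v - EuclideanSpace.single (Fin.last n) (1 : ℝ) = t⁻¹ • w := by
        rw [hv]; abel
      rw [Metric.mem_ball, dist_eq_norm, hsub', norm_smul, Real.norm_eq_abs,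
        abs_inv, abs_of_pos ht0, inv_mul_lt_iff₀ ht0]
      have hεt : t * ε = ‖w‖ + ε := by
        rw [htd]; field_simp
      linarith
    rw [hC] at hvC
    have hmem := hvC p hp t (le_of_lt ht0)
    have heq : p + t • v
        = (WithLp.toLp 2 (Function.update x (Fin.last n) (p (Fin.last n) + t)) :
            EuclideanSpace ℝ (Fin (n + 1))) := by
      ext i
      show p i + t * ((EuclideanSpace.single (Fin.last n) (1:ℝ)) i + t⁻¹ * w i)
        = Function.update x (Fin.last n) (p (Fin.last n) + t) i
      rw [EuclideanSpace.single_apply, hw]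
      by_cases hi : i = Fin.last n
      · subst hi
        simp
      · simp only [if_neg hi, Function.update_apply]
        field_simp
        try ring
    refine ⟨p (Fin.last n) + t, ?_⟩
    show (WithLp.toLp 2 (Function.update x (Fin.last n) (p (Fin.last n) + t)) :
        EuclideanSpace ℝ (Fin (n + 1))) ∈ K
    rw [← heq]
    exact hmem
  -- S is closed
  have hSclosed : IsClosed S := by
    obtain ⟨c, hc⟩ : ∃ c : EuclideanSpace ℝ (Fin (n + 1)),
        c = (WithLp.toLp 2 (Function.update x (Fin.last n) 0) : EuclideanSpace ℝ (Fin (n + 1))) := ⟨_, rfl⟩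
    have hrepr : S = (fun t : ℝ =>
        c + t • EuclideanSpace.single (Fin.last n) (1 : ℝ)) ⁻¹' K := by
      ext t
      show (WithLp.toLp 2 (Function.update x (Fin.last n) t) : EuclideanSpace ℝ (Fin (n + 1))) ∈ K ↔
        c + t • EuclideanSpace.single (Fin.last n) (1 : ℝ) ∈ K
      rw [hc, upd_add_aux n x 0 t, zero_add]
    rw [hrepr]
    exact hKclosed.preimage (continuous_const.add (continuous_id.smul continuous_const))
  have hbdd : BddBelow S := ⟨0, fun t ht => hS0 ht⟩
  refine ⟨sInf S, le_csInf hSne (fun t ht => hS0 ht), ?_⟩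
  apply Set.Subset.antisymm
  · intro t ht
    exact csInf_le hbdd ht
  · intro t ht
    rcases eq_or_lt_of_le (Set.mem_Ici.mp ht) with h | h
    · rw [← h]
      exact hSclosed.csInf_mem hSne hbdd
    · obtain ⟨s, hs, hst⟩ := exists_lt_of_csInf_lt hSne h
      exact hup s hs t (le_of_lt hst)
end

section
/- Define Pecker's polynomials by P₁(y₁, t) = t − y₁ and P_{m+1}(y₁,...,y_{m+1}, t) = P_m(a₁(y₁,y₂), ..., a_m(y₁,...,y_{m+1}), (t − (y₁+...+y_{m+1}))²), where a_k(y₁,...,y_{k+1}) = y_{k+1}(y₁+...+y_k). Then for all nonnegative reals y₁,...,y_m and any real root t of P_m(y₁,...,y_m, ·), one has 0 ≤ t ≤ 2(y₁ + ... + y_m). -/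
noncomputable def pecker : (m : ℕ) → (Fin (m + 1) → ℝ) → ℝ → ℝ
  | 0, y, t => t - y 0
  | m + 1, y, t =>
      pecker m
        (fun k : Fin (m + 1) =>
          y k.succ * ∑ i : Fin (k.1 + 1), y ⟨i.1, by have := i.isLt; have := k.isLt; omega⟩)
        ((t - ∑ i, y i) ^ 2)

noncomputable def peckerA : (m : ℕ) → (Fin (m + 1) → ℝ) → ℝ
  | 0, y => y 0
  | m + 1, y =>
      peckerA m
        (fun k : Fin (m + 1) =>
          y k.succ * ∑ i : Fin (k.1 + 1), y ⟨i.1, by have := i.isLt; have := k.isLt; omega⟩)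

/-!
Each `y ↦ a(y)` step turns `Pₘ₊₁(y, t) = 0` into `Pₘ(a(y), (t - S)²) = 0` with `S = ∑ yᵢ`, and the
new variables `a(y)` are again nonnegative. By induction `(t - S)² ≤ 2 ∑ₖ aₖ(y)`, and `2 ∑ₖ aₖ(y)`
is the cross-term part of `S² = ∑ yᵢ² + 2 ∑_{i<j} yᵢ yⱼ`, so `(t - S)² ≤ S²`, i.e. `|t - S| ≤ S`.
-/

open Finset

theorem sq_sum_range_succ_eq {R : Type*} [CommSemiring R] (f : ℕ → R) (n : ℕ) :
    (∑ i ∈ range (n + 1), f i) ^ 2 =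
      ∑ i ∈ range (n + 1), f i ^ 2 + 2 * ∑ j ∈ range n, f (j + 1) * ∑ i ∈ range (j + 1), f i := by
  induction n with
  | zero => simp
  | succ n ih =>
    rw [sum_range_succ f (n + 1), add_sq, ih, sum_range_succ (fun i => f i ^ 2) (n + 1),
      sum_range_succ (fun j => f (j + 1) * ∑ i ∈ range (j + 1), f i)]
    ring

/-- The substitution `yᵢ ↦ aᵢ(y)` performed by one step of the recursion defining `pecker`. -/
noncomputable def peckerWeights {m : ℕ} (y : Fin (m + 2) → ℝ) : Fin (m + 1) → ℝ :=
  fun k => y k.succ * ∑ i : Fin (k.1 + 1), y ⟨i.1, by omega⟩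

theorem pecker_succ (m : ℕ) (y : Fin (m + 2) → ℝ) (t : ℝ) :
    pecker (m + 1) y t = pecker m (peckerWeights y) ((t - ∑ i, y i) ^ 2) :=
  rfl

theorem peckerWeights_nonneg {m : ℕ} {y : Fin (m + 2) → ℝ} (hy : ∀ i, 0 ≤ y i) (k : Fin (m + 1)) :
    0 ≤ peckerWeights y k :=
  mul_nonneg (hy _) (sum_nonneg fun _ _ => hy _)

theorem two_mul_sum_peckerWeights_le {m : ℕ} (y : Fin (m + 2) → ℝ) :
    2 * ∑ k, peckerWeights y k ≤ (∑ i, y i) ^ 2 := by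
  set f : ℕ → ℝ := fun i => if h : i < m + 2 then y ⟨i, h⟩ else 0
  have hf : ∀ i (hi : i < m + 2), y ⟨i, hi⟩ = f i := fun i hi => by simp [f, hi]
  have hweights : ∑ k, peckerWeights y k =
      ∑ j ∈ range (m + 1), f (j + 1) * ∑ i ∈ range (j + 1), f i := by
    rw [← Fin.sum_univ_eq_sum_range]
    refine sum_congr rfl fun k _ => ?_
    have hsucc : y k.succ = f (k + 1) := hf (k + 1) (by omega)
    simp only [peckerWeights, hsucc, hf, Fin.sum_univ_eq_sum_range f]
  have hsum : ∑ i, y i = ∑ i ∈ range (m + 2), f i := by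
    rw [← Fin.sum_univ_eq_sum_range]
    exact sum_congr rfl fun i _ => hf i i.isLt
  rw [hweights, hsum, sq_sum_range_succ_eq]
  exact le_add_of_nonneg_left (sum_nonneg fun i _ => sq_nonneg (f i))

/-- Here `pecker m` is the polynomial $P_{m+1}$ of the paper. -/
theorem stmt13 (m : ℕ) (y : Fin (m + 1) → ℝ) (hy : ∀ i, 0 ≤ y i) (t : ℝ)
    (ht : pecker m y t = 0) : 0 ≤ t ∧ t ≤ 2 * ∑ i, y i := by
  induction m generalizing t with
  | zero =>
    obtain rfl : t = y 0 := sub_eq_zero.mp ht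
    exact ⟨hy 0, by rw [Fin.sum_univ_one]; linarith [hy 0]⟩
  | succ m ih =>
    rw [pecker_succ] at ht
    have hS : 0 ≤ ∑ i, y i := sum_nonneg fun i _ => hy i
    have hsq : (t - ∑ i, y i) ^ 2 ≤ (∑ i, y i) ^ 2 :=
      ((ih _ (peckerWeights_nonneg hy) _ ht).2).trans (two_mul_sum_peckerWeights_le y)
    obtain ⟨hlow, hhigh⟩ := abs_le_of_sq_le_sq' hsq hS
    constructor <;> linarith
end

section
/- Define A₁(y₁) = y₁ and A_{k+1}(y₁,...,y_{k+1}) = A_k(a₁(y₁,y₂),...,a_k(y₁,...,y_{k+1})) with a_k(y₁,...,y_{k+1}) = y_{k+1}(y₁+⋯+y_k). Then for every m ≥ 1 there exists a homogeneous polynomial B_{m−1} ∈ ℤ[y₁,...,y_{m−1}] of degree 2^{m−1} − m with nonnegative coefficients such that A_m(y₁,...,y_m) = y₁ ⋯ y_m · B_{m−1}(y₁,...,y_{m−1}); moreover A_m is homogeneous of degree 2^{m−1}. -/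
open MvPolynomial

theorem MvPolynomial.aeval_comp_X {R S σ : Type*} [CommSemiring R] [CommSemiring S] [Algebra R S]
    (g : σ → S) : ⇑(aeval (R := R) g) ∘ X = g :=
  _root_.funext (aeval_X g)

namespace Pecker

variable {R S : Type*} [CommSemiring R] [CommSemiring S] {n : ℕ}

def prefixSum (y : Fin n → R) (k : Fin n) : R :=
  ∑ i : Fin (k + 1), y (Fin.castLE k.isLt i)

/-- `yₖ ↦ y_{k+1} (y₀ + ⋯ + yₖ)`: the paper's `a_{k+1}`, with variables indexed from `0`. -/
def step (y : Fin (n + 1) → R) (k : Fin n) : R :=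
  y k.succ * prefixSum y k.castSucc

theorem prefixSum_zero (y : Fin (n + 1) → R) : prefixSum y 0 = y 0 :=
  Fin.sum_univ_one _

theorem prefixSum_comp_castSucc (y : Fin (n + 1) → R) (k : Fin n) :
    prefixSum (y ∘ Fin.castSucc) k = prefixSum y k.castSucc :=
  rfl

theorem step_comp_castSucc (y : Fin (n + 2) → R) :
    step (y ∘ Fin.castSucc) = step y ∘ Fin.castSucc :=
  rfl

theorem map_prefixSum {F : Type*} [FunLike F R S] [RingHomClass F R S] (f : F)
    (y : Fin n → R) (k : Fin n) : f (prefixSum y k) = prefixSum (f ∘ y) k :=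
  map_sum f _ _

theorem map_step {F : Type*} [FunLike F R S] [RingHomClass F R S] (f : F)
    (y : Fin (n + 1) → R) (k : Fin n) : f (step y k) = step (f ∘ y) k := by
  simp only [step, map_mul, map_prefixSum, Function.comp_apply]

theorem step_smul (c : R) (y : Fin (n + 1) → R) : step (c • y) = c ^ 2 • step y := by
  ext k
  simp only [step, prefixSum, Pi.smul_apply, smul_eq_mul, ← Finset.mul_sum]
  ring

theorem prod_step (y : Fin (n + 2) → R) :
    ∏ k, step y k = (∏ i, y i) * ∏ j : Fin n, prefixSum y j.succ.castSucc := by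
  simp only [step, Finset.prod_mul_distrib]
  rw [Fin.prod_univ_succ y, Fin.prod_univ_succ fun k => prefixSum y k.castSucc]
  simp only [Fin.castSucc_zero, prefixSum_zero]
  ring

theorem isHomogeneous_prefixSum_X (k : Fin n) :
    (prefixSum (X : Fin n → MvPolynomial (Fin n) R) k).IsHomogeneous 1 :=
  IsHomogeneous.sum _ _ _ fun _ _ => isHomogeneous_X R _

theorem isHomogeneous_step_X (k : Fin n) :
    (step (X : Fin (n + 1) → MvPolynomial (Fin (n + 1)) R) k).IsHomogeneous 2 :=
  (isHomogeneous_X R _).mul (isHomogeneous_prefixSum_X _)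

end Pecker

open Pecker

noncomputable def peckerB : (m : ℕ) → MvPolynomial (Fin m) ℕ
  | 0 => 1
  | m + 1 => (∏ j : Fin m, prefixSum X j.succ) * bind₁ (step X) (peckerB m)

theorem peckerB_isHomogeneous (m : ℕ) : (peckerB m).IsHomogeneous (2 ^ m - (m + 1)) := by
  induction m with
  | zero => exact isHomogeneous_one _ _
  | succ m ih =>
    have hdeg : 2 ^ (m + 1) - (m + 1 + 1) = ∑ _j : Fin m, 1 + 2 * (2 ^ m - (m + 1)) := by
      have : m < 2 ^ m := Nat.lt_two_pow_self
      simp only [Finset.sum_const, Finset.card_univ, Fintype.card_fin, smul_eq_mul, mul_one]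
      omega
    rw [peckerB, hdeg]
    exact (IsHomogeneous.prod _ _ _ fun j _ => isHomogeneous_prefixSum_X j.succ).mul
      (ih.aeval _ isHomogeneous_step_X)

theorem peckerA_succ (m : ℕ) (y : Fin (m + 2) → ℝ) : peckerA (m + 1) y = peckerA m (step y) :=
  rfl

theorem peckerA_eq_prod_mul_aeval_peckerB (m : ℕ) (y : Fin (m + 1) → ℝ) :
    peckerA m y = (∏ i, y i) * aeval (y ∘ Fin.castSucc) (peckerB m) := by
  induction m with
  | zero => simp [peckerA, peckerB]
  | succ m ih =>
    have haeval_step : (fun k => aeval (y ∘ Fin.castSucc) (step X k : MvPolynomial _ ℕ)) =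
        step y ∘ Fin.castSucc := by
      ext k
      rw [map_step, aeval_comp_X, ← step_comp_castSucc]
    rw [peckerA_succ, ih, prod_step, peckerB, map_mul, map_prod, aeval_bind₁, haeval_step]
    simp only [map_prefixSum, aeval_comp_X, ← prefixSum_comp_castSucc, mul_assoc]

theorem peckerA_smul (m : ℕ) (c : ℝ) (y : Fin (m + 1) → ℝ) :
    peckerA m (c • y) = c ^ 2 ^ m * peckerA m y := by
  induction m generalizing c with
  | zero => simp [peckerA]
  | succ m ih => rw [peckerA_succ, peckerA_succ, step_smul, ih, ← pow_mul, pow_succ']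

theorem stmt16 (m : ℕ) :
    (∀ (c : ℝ) (y : Fin (m + 1) → ℝ), peckerA m (c • y) = c ^ (2 ^ m) * peckerA m y) ∧
    ∃ B : MvPolynomial (Fin m) ℤ,
      (∀ d, 0 ≤ B.coeff d) ∧
      B.IsHomogeneous (2 ^ m - (m + 1)) ∧
      ∀ y : Fin (m + 1) → ℝ,
        peckerA m y = (∏ i, y i) *
          MvPolynomial.eval (fun i : Fin m => y i.castSucc)
            (MvPolynomial.map (Int.castRingHom ℝ) B) := by
  refine ⟨peckerA_smul m, map (Nat.castRingHom ℤ) (peckerB m),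
    fun d => (coeff_map _ _ _).trans_ge (Int.natCast_nonneg _),
    (peckerB_isHomogeneous m).map _, fun y => ?_⟩
  rw [peckerA_eq_prod_mul_aeval_peckerB, map_map, eval_map, aeval_def]
  congr 2
end

section
/- With Pecker's polynomials P_m and the polynomials A_m, for any nonnegative reals y₁,...,y_m with m ≥ 2, there exists a real t_m ≥ y₁ + ... + y_m such that P_m(y₁,...,y_m, t_m) = −A_m(y₁,...,y_m). -/
theorem stmt17 (m : ℕ) (hm : 1 ≤ m) (y : Fin (m + 1) → ℝ) (hy : ∀ i, 0 ≤ y i) :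
    ∃ t : ℝ, (∑ i, y i) ≤ t ∧ pecker m y t = - peckerA m y := by
  induction m, hm using Nat.le_induction with
  | base =>
      refine ⟨∑ i, y i, le_refl _, ?_⟩
      simp only [pecker, peckerA, sub_self]
      ring
  | succ n hn ih =>
      set a : Fin (n + 1) → ℝ := fun k : Fin (n + 1) =>
          y k.succ * ∑ i : Fin (k.1 + 1), y ⟨i.1, by have := i.isLt; have := k.isLt; omega⟩
        with ha_def
      have ha : ∀ i, 0 ≤ a i := fun i =>
        mul_nonneg (hy _) (Finset.sum_nonneg fun _ _ => hy _)
      obtain ⟨s, hs1, hs2⟩ := ih a ha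
      have hs0 : 0 ≤ s := le_trans (Finset.sum_nonneg fun i _ => ha i) hs1
      refine ⟨(∑ i, y i) + Real.sqrt s, le_add_of_nonneg_right (Real.sqrt_nonneg s), ?_⟩
      show pecker n a (((∑ i, y i) + Real.sqrt s - ∑ i, y i) ^ 2) = - peckerA n a
      rw [add_sub_cancel_left, Real.sq_sqrt hs0]
      exact hs2
end
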